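/- Let p ≥ 5 be a prime and let q ≥ 2 be an integer. Then d(pq + 1, p, (3p−1)/2) = (pq² − (4p−1)q + 4p − 4)/(4(pq+1)). -/

import Mathlib

/-!
Since `(pq + 1) mod p = 1`, the recursion reaches `d(p, 1, ·)` after one step and stops one step
later at `d(1, 0, ·) = 0`; for odd `p = 2k + 1` the index `(3p - 1)/2 = 3k + 1` reduces to `k`
modulo `p`, and the claim becomes an identity of rational functions.
-/

/-- Ozsváth–Szabó's recursive formula for the correction terms (d-invariants)
`d(L(p,q), i)` of lens spaces: `d(p, 0, i) = 0` and, for `q ≥ 1`,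
`d(p, q, i) = -1/4 + (2i + 1 - p - q)^2 / (4pq) - d(q, p mod q, i mod q)`. -/
def lensD (p q i : ℕ) : ℚ :=
  if h : q = 0 then 0
  else -1/4 + ((2 * i + 1 - p - q : ℚ)) ^ 2 / (4 * p * q)
       - lensD q (p % q) (i % q)
termination_by q
decreasing_by exact Nat.mod_lt _ (Nat.pos_of_ne_zero h)

theorem lensD_zero (p i : ℕ) : lensD p 0 i = 0 := by
  rw [lensD, dif_pos rfl]

theorem lensD_of_ne_zero {p q : ℕ} (i : ℕ) (hq : q ≠ 0) :
    lensD p q i = -1/4 + ((2 * i + 1 - p - q : ℚ)) ^ 2 / (4 * p * q)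
      - lensD q (p % q) (i % q) := by
  rw [lensD, dif_neg hq]

theorem lensD_one (p i : ℕ) : lensD p 1 i = -1/4 + ((2 * i - p : ℚ)) ^ 2 / (4 * p) := by
  rw [lensD_of_ne_zero i one_ne_zero, Nat.mod_one, Nat.mod_one, lensD_zero]
  push_cast
  ring_nf

theorem lensD_mul_add_one {p : ℕ} (q i : ℕ) (hp : 1 < p) :
    lensD (p * q + 1) p i = -1/4 + ((2 * i - p * q - p : ℚ)) ^ 2 / (4 * (p * q + 1) * p)
      - lensD p 1 (i % p) := by
  have hmod : (p * q + 1) % p = 1 := by rw [Nat.mul_add_mod, Nat.mod_eq_of_lt hp]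
  rw [lensD_of_ne_zero i (by omega), hmod]
  push_cast
  ring_nf

theorem lensD_odd_mul_add_one (k q : ℕ) (hk : 1 ≤ k) :
    lensD ((2 * k + 1) * q + 1) (2 * k + 1) (3 * k + 1) =
      (((2 * k + 1 : ℕ) : ℚ) * q ^ 2 - (4 * (2 * k + 1 : ℕ) - 1) * q + 4 * (2 * k + 1 : ℕ) - 4)
        / (4 * (((2 * k + 1 : ℕ) : ℚ) * q + 1)) := by
  have hmod : (3 * k + 1) % (2 * k + 1) = k := by
    rw [show 3 * k + 1 = k + (2 * k + 1) by ring, Nat.add_mod_right, Nat.mod_eq_of_lt (by omega)]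
  rw [lensD_mul_add_one q _ (by omega), hmod, lensD_one]
  push_cast
  field_simp
  ring

theorem lensD_pq_add_one'_general (p q : ℕ) (hp : p.Prime) (hp5 : 5 ≤ p) :
    lensD (p * q + 1) p ((3 * p - 1) / 2) =
      ((p : ℚ) * q ^ 2 - (4 * p - 1) * q + 4 * p - 4) / (4 * ((p : ℚ) * q + 1)) := by
  obtain ⟨k, rfl⟩ : Odd p := hp.odd_of_ne_two (by omega)
  rw [show (3 * (2 * k + 1) - 1) / 2 = 3 * k + 1 by omega]
  exact lensD_odd_mul_add_one k q (by omega)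

/-- For `p ≥ 5` prime and `q ≥ 2`,
`d(pq + 1, p, (3p-1)/2) = (pq² - (4p-1)q + 4p - 4) / (4(pq+1))`. -/
theorem lensD_pq_add_one' (p q : ℕ) (hp : p.Prime) (hp5 : 5 ≤ p) (hq : 2 ≤ q) :
    lensD (p * q + 1) p ((3 * p - 1) / 2) =
      ((p : ℚ) * q ^ 2 - (4 * p - 1) * q + 4 * p - 4) / (4 * ((p : ℚ) * q + 1)) :=
  lensD_pq_add_one'_general p q hp hp5
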